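/- arXiv:2301.12187 — 2 statements merged into one kernel-verified Lean document; each statement's English description precedes it below -/
import Mathlib

section
/- Under the recurrence assumptions, for every l ≥ 1 and every real t > T_opt(0, l), the set S(l,t) minimizes the latency among all merge patterns containing A(l,t); that is, chainSum T ({0} ∪ S(l,t) ∪ {l}) = min over all finite sets S' with A(l,t) ⊆ S' ⊆ {1, …, l−1} of chainSum T ({0} ∪ S' ∪ {l}). -/
noncomputable section

/-- Chain sum of `f` over the consecutive pairs of the elements of `P` in increasing order. -/
def chainSum (f : ℕ → ℕ → ℝ) (P : Finset ℕ) : ℝ :=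
  (List.zipWith f (P.sort (· ≤ ·)) (P.sort (· ≤ ·)).tail).sum

/-- Optimal latency `T_opt(k,l)`: the minimum of `chainSum T ({k} ∪ S ∪ {l})`
over all finite sets `S ⊆ {k+1,…,l−1}`. -/
def Topt (T : ℕ → ℕ → ℝ) (k l : ℕ) : ℝ :=
  ((Finset.Ioo k l).powerset.image (fun S => chainSum T ({k} ∪ S ∪ {l}))).min'
    ((Finset.powerset_nonempty _).image _)

/-!
Optimal substructure. A merge pattern from `0` to `l` that contains `k` splits at `k` into a
pattern from `0` to `k` and one from `k` to `l`, and its latency is the sum of theirs. If it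
contains `A(l,t) = A(k,t') ∪ {k}` (with `t' = t - T_opt(k,l)`), the first part contains
`A(k,t')`, so by induction on `l` its latency is at least that of `S(k,t')`, and the second is
at least `T_opt(k,l)`, which `S_opt(k,l)` attains. When `k = 0` the recurrence gives
`S(l,t) = S_opt(0,l)` and `A(l,t) = ∅` directly.
-/

open Finset

def pathSum (f : ℕ → ℕ → ℝ) (L : List ℕ) : ℝ :=
  (List.zipWith f L L.tail).sum

theorem pathSum_append_cons (f : ℕ → ℕ → ℝ) (L₁ L₂ : List ℕ) (k : ℕ) :
    pathSum f (L₁ ++ k :: L₂) = pathSum f (L₁ ++ [k]) + pathSum f (k :: L₂) := by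
  induction L₁ with
  | nil => simp [pathSum]
  | cons a L₁ ih =>
    cases L₁ with
    | nil => simp [pathSum]
    | cons b L₁ =>
      simp only [pathSum, List.cons_append, List.tail_cons, List.zipWith_cons_cons,
        List.sum_cons] at ih ⊢
      rw [ih]
      ring

theorem Finset.sort_eq_of_pairwise_lt {α : Type*} [LinearOrder α] {s : Finset α} {L : List α}
    (hL : L.Pairwise (· < ·)) (hs : L.toFinset = s) : s.sort = L := by
  subst hs
  exact (List.toFinset_sort _ hL.nodup).2 (hL.imp le_of_lt)

theorem chainSum_union (f : ℕ → ℕ → ℝ) {P Q : Finset ℕ} {k : ℕ} (hkP : k ∈ P) (hkQ : k ∈ Q)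
    (hP : ∀ x ∈ P, x ≤ k) (hQ : ∀ x ∈ Q, k ≤ x) :
    chainSum f (P ∪ Q) = chainSum f P + chainSum f Q := by
  have hP' : ∀ x ∈ P.erase k, x < k := fun x hx =>
    lt_of_le_of_ne (hP x (mem_of_mem_erase hx)) (ne_of_mem_erase hx)
  have hQ' : ∀ x ∈ Q.erase k, k < x := fun x hx =>
    lt_of_le_of_ne (hQ x (mem_of_mem_erase hx)) (ne_of_mem_erase hx).symm
  have hsortP : P.sort = (P.erase k).sort ++ [k] := by
    refine sort_eq_of_pairwise_lt ?_ ?_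
    · refine List.pairwise_append.2 ⟨(sortedLT_sort _).pairwise, by simp, ?_⟩
      simpa using hP'
    · simp [insert_erase hkP]
  have hsortQ : Q.sort = k :: (Q.erase k).sort := by
    refine sort_eq_of_pairwise_lt ?_ ?_
    · refine List.pairwise_cons.2 ⟨?_, (sortedLT_sort _).pairwise⟩
      simpa using hQ'
    · simp [insert_erase hkQ]
  have hsortPQ : (P ∪ Q).sort = (P.erase k).sort ++ k :: (Q.erase k).sort := by
    refine sort_eq_of_pairwise_lt ?_ ?_
    · refine List.pairwise_append.2 ⟨(sortedLT_sort _).pairwise,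
        List.pairwise_cons.2 ⟨by simpa using hQ', (sortedLT_sort _).pairwise⟩, ?_⟩
      simp only [mem_sort, List.mem_cons]
      rintro x hx y (rfl | hy)
      exacts [hP' x hx, (hP' x hx).trans (hQ' y hy)]
    · ext x
      by_cases hx : x = k <;> simp [hx, hkP]
  change pathSum f _ = pathSum f _ + pathSum f _
  rw [hsortPQ, hsortP, hsortQ, pathSum_append_cons]

theorem chainSum_split (f : ℕ → ℕ → ℝ) {a k b : ℕ} {X Y : Finset ℕ} (hX : X ⊆ Ioo a k)
    (hY : Y ⊆ Ioo k b) (hak : a ≤ k) (hkb : k ≤ b) :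
    chainSum f ({a} ∪ (X ∪ {k} ∪ Y) ∪ {b}) =
      chainSum f ({a} ∪ X ∪ {k}) + chainSum f ({k} ∪ Y ∪ {b}) := by
  have hunion : {a} ∪ (X ∪ {k} ∪ Y) ∪ {b} = ({a} ∪ X ∪ {k}) ∪ ({k} ∪ Y ∪ {b}) := by
    ext x
    simp only [mem_union, mem_singleton]
    tauto
  rw [hunion]
  refine chainSum_union f (k := k) (by simp) (by simp) ?_ ?_
  · intro x hx
    simp only [mem_union, mem_singleton] at hx
    rcases hx with (rfl | hx) | rfl
    exacts [hak, (mem_Ioo.1 (hX hx)).2.le, le_rfl]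
  · intro x hx
    simp only [mem_union, mem_singleton] at hx
    rcases hx with (rfl | hx) | rfl
    exacts [le_rfl, (mem_Ioo.1 (hY hx)).1.le, hkb]

theorem chainSum_split_of_mem (f : ℕ → ℕ → ℝ) {a k b : ℕ} {S : Finset ℕ} (hk : k ∈ S)
    (hS : S ⊆ Ioo a b) :
    chainSum f ({a} ∪ S ∪ {b}) =
      chainSum f ({a} ∪ (S ∩ Ioo a k) ∪ {k}) + chainSum f ({k} ∪ (S ∩ Ioo k b) ∪ {b}) := by
  have hak := mem_Ioo.1 (hS hk)
  have hdecomp : S = S ∩ Ioo a k ∪ {k} ∪ S ∩ Ioo k b := by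
    ext x
    have := fun hx : x ∈ S => mem_Ioo.1 (hS hx)
    simp only [mem_union, mem_inter, mem_Ioo, mem_singleton]
    constructor
    · intro hx
      rcases lt_trichotomy x k with h | rfl | h
      exacts [.inl (.inl ⟨hx, (this hx).1, h⟩), .inl (.inr rfl), .inr ⟨hx, h, (this hx).2⟩]
    · rintro ((⟨hx, -⟩ | rfl) | ⟨hx, -⟩) <;> assumption
  conv_lhs => rw [hdecomp]
  exact chainSum_split f inter_subset_right inter_subset_right hak.1.le hak.2.le

theorem Topt_le_chainSum (T : ℕ → ℕ → ℝ) {k l : ℕ} {S : Finset ℕ} (hS : S ⊆ Ioo k l) :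
    Topt T k l ≤ chainSum T ({k} ∪ S ∪ {l}) :=
  min'_le _ _ (mem_image_of_mem _ (mem_powerset.2 hS))

theorem exists_chainSum_eq_Topt (T : ℕ → ℕ → ℝ) (k l : ℕ) :
    ∃ S ⊆ Ioo k l, chainSum T ({k} ∪ S ∪ {l}) = Topt T k l := by
  obtain ⟨S, hS, hSmin⟩ := mem_image.1 (min'_mem _ _ : Topt T k l ∈ _)
  exact ⟨S, mem_powerset.1 hS, hSmin⟩

def patternLatencies (T : ℕ → ℕ → ℝ) (a : ℕ) (A : Finset ℕ) (b : ℕ) : Set ℝ :=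
  {x | ∃ S : Finset ℕ, A ⊆ S ∧ S ⊆ Ioo a b ∧ x = chainSum T ({a} ∪ S ∪ {b})}

theorem isLeast_patternLatencies_empty (T : ℕ → ℕ → ℝ) (a b : ℕ) :
    IsLeast (patternLatencies T a ∅ b) (Topt T a b) := by
  obtain ⟨S, hS, hSopt⟩ := exists_chainSum_eq_Topt T a b
  exact ⟨⟨S, empty_subset S, hS, hSopt.symm⟩,
    fun _ ⟨S', _, hS', hx⟩ => hx ▸ Topt_le_chainSum T hS'⟩

theorem isLeast_patternLatencies_union_singleton (T : ℕ → ℕ → ℝ) {a k b : ℕ} {A : Finset ℕ}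
    {c : ℝ} (hak : a < k) (hkb : k < b) (hA : A ⊆ Ioo a k)
    (hc : IsLeast (patternLatencies T a A k) c) :
    IsLeast (patternLatencies T a (A ∪ {k}) b) (c + Topt T k b) := by
  constructor
  · obtain ⟨X, hAX, hX, rfl⟩ := hc.1
    obtain ⟨Y, hY, hYopt⟩ := exists_chainSum_eq_Topt T k b
    refine ⟨X ∪ {k} ∪ Y, union_subset_union hAX subset_rfl |>.trans subset_union_left, ?_, ?_⟩
    · intro x hx
      simp only [mem_union, mem_singleton] at hx
      rcases hx with (hx | rfl) | hx
      · exact Ioo_subset_Ioo_right hkb.le (hX hx)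
      · exact mem_Ioo.2 ⟨hak, hkb⟩
      · exact Ioo_subset_Ioo_left hak.le (hY hx)
    · rw [chainSum_split T hX hY hak.le hkb.le, hYopt]
  · rintro _ ⟨S, hAS, hS, rfl⟩
    rw [chainSum_split_of_mem T (hAS (mem_union_right _ (mem_singleton_self k))) hS]
    refine add_le_add (hc.2 ⟨S ∩ Ioo a k, ?_, inter_subset_right, rfl⟩)
      (Topt_le_chainSum T inter_subset_right)
    exact subset_inter (subset_union_left.trans hAS) hA

/-- Under the recurrence assumptions, for every `l ≥ 1` and `t > T_opt(0,l)`, the merge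
pattern `S l t` minimizes the latency among all merge patterns containing `A l t`. -/
theorem merge_pattern_latency_optimal
    (T I : ℕ → ℕ → ℝ) (A S : ℕ → ℝ → Finset ℕ)
    (hA_sub : ∀ l t, A l t ⊆ Finset.Ioo 0 l)
    (hS_sub : ∀ l t, S l t ⊆ Finset.Ioo 0 l)
    (hbase : ∀ t, A 0 t = ∅ ∧ S 0 t = ∅)
    (hrec : ∀ l, 1 ≤ l → ∀ t : ℝ, Topt T 0 l < t →
      ∃ k, k < l ∧ ∃ Sopt : Finset ℕ, Sopt ⊆ Finset.Ioo k l ∧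
        chainSum T ({k} ∪ Sopt ∪ {l}) = Topt T k l ∧
        Topt T 0 k + Topt T k l < t ∧
        (∀ k', k' < l → Topt T 0 k' + Topt T k' l < t →
          chainSum I ({0} ∪ A k' (t - Topt T k' l) ∪ {k', l}) ≤
            chainSum I ({0} ∪ A k (t - Topt T k l) ∪ {k, l})) ∧
        A l t = A k (t - Topt T k l) ∪ ({k} \ {0}) ∧
        S l t = S k (t - Topt T k l) ∪ ({k} \ {0}) ∪ Sopt) :
    ∀ l, 1 ≤ l → ∀ t : ℝ, Topt T 0 l < t →
      IsLeast {x : ℝ | ∃ S' : Finset ℕ, A l t ⊆ S' ∧ S' ⊆ Finset.Ioo 0 l ∧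
          x = chainSum T ({0} ∪ S' ∪ {l})}
        (chainSum T ({0} ∪ S l t ∪ {l})) := by
  intro l
  induction l using Nat.strong_induction_on with
  | _ l ih =>
  intro hl t ht
  obtain ⟨k, hkl, Sopt, hSopt, hchain, hsum, -, hA, hS⟩ := hrec l hl t ht
  change IsLeast (patternLatencies T 0 (A l t) l) _
  rcases Nat.eq_zero_or_pos k with rfl | hk
  · rw [hA, hS, (hbase _).1, (hbase _).2, Finset.sdiff_self, empty_union, empty_union,
      hchain]
    exact isLeast_patternLatencies_empty T 0 l
  · have hk0 : ({k} : Finset ℕ) \ {0} = {k} := by simp [hk.ne']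
    rw [hA, hS, hk0, chainSum_split T (hS_sub _ _) hSopt (Nat.zero_le k) hkl.le, hchain]
    exact isLeast_patternLatencies_union_singleton T hk hkl (hA_sub _ _)
      (ih k hkl hk _ (by linarith))
end
end

section
/- Let 0 < k < l be natural numbers, let A' be a finite subset of {1, …, l−1}, and let A be a nonempty finite subset of {1, …, l−1} with maximum element k. For any finite set S* with A ⊆ S* ⊆ {1, …, l−1}, one has chainSum T ({0} ∪ S* ∪ {l}) ≥ chainSum T ({0} ∪ {s ∈ S* : s < k} ∪ {k}) + T_opt(k, l). -/
noncomputable section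

/-! A chain through `0 < k < l` that visits `k` splits at `k` into a chain from `0` to `k` and a
chain from `k` to `l`; the second one is admissible in the minimum defining `Topt T k l`. -/

open Finset

theorem List.sum_zipWith_tail_append_cons {α M : Type*} [AddCommMonoid M] (f : α → α → M)
    (l₁ : List α) (x : α) (l₂ : List α) :
    (zipWith f (l₁ ++ x :: l₂) (l₁ ++ x :: l₂).tail).sum =
      (zipWith f (l₁ ++ [x]) (l₁ ++ [x]).tail).sum + (zipWith f (x :: l₂) l₂).sum := by
  induction l₁ with
  | nil => simp
  | cons a t ih =>
    cases t with
    | nil => simp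
    | cons b t =>
      simp only [cons_append, tail_cons, zipWith_cons_cons, sum_cons] at ih ⊢
      rw [ih, add_assoc]

theorem Finset.sort_union_of_forall_lt {α : Type*} [LinearOrder α] {s t : Finset α}
    (h : ∀ a ∈ s, ∀ b ∈ t, a < b) :
    (s ∪ t).sort (· ≤ ·) = s.sort (· ≤ ·) ++ t.sort (· ≤ ·) := by
  have hdisj : Disjoint s t := disjoint_left.2 fun a has hat => lt_irrefl a (h a has a hat)
  refine List.Perm.eq_of_pairwise' (pairwise_sort _ _) ?_ ?_
  · rw [List.pairwise_append]
    exact ⟨pairwise_sort _ _, pairwise_sort _ _, fun a ha b hb =>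
      (h a (mem_sort _ |>.1 ha) b (mem_sort _ |>.1 hb)).le⟩
  · rw [← Multiset.coe_eq_coe, ← Multiset.coe_add, sort_eq, sort_eq, sort_eq,
      ← disjUnion_eq_union s t hdisj]
    rfl

theorem chainSum_union_singleton_union (f : ℕ → ℕ → ℝ) {s t : Finset ℕ} {k : ℕ}
    (hs : ∀ a ∈ s, a < k) (ht : ∀ b ∈ t, k < b) :
    chainSum f (s ∪ {k} ∪ t) = chainSum f (s ∪ {k}) + chainSum f ({k} ∪ t) := by
  have hsk : (s ∪ {k}).sort (· ≤ ·) = s.sort (· ≤ ·) ++ [k] := by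
    rw [sort_union_of_forall_lt fun a ha b hb => mem_singleton.1 hb ▸ hs a ha, sort_singleton]
  have hkt : ({k} ∪ t).sort (· ≤ ·) = k :: t.sort (· ≤ ·) := by
    rw [sort_union_of_forall_lt fun a ha b hb => mem_singleton.1 ha ▸ ht b hb, sort_singleton,
      List.singleton_append]
  have hskt : (s ∪ {k} ∪ t).sort (· ≤ ·) = s.sort (· ≤ ·) ++ k :: t.sort (· ≤ ·) := by
    rw [sort_union_of_forall_lt, hsk, List.append_assoc, List.singleton_append]
    intro a ha b hb
    rcases mem_union.1 ha with ha | ha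
    · exact (hs a ha).trans (ht b hb)
    · exact mem_singleton.1 ha ▸ ht b hb
  rw [chainSum, chainSum, chainSum, hskt, hsk, hkt, List.sum_zipWith_tail_append_cons]
  rfl

theorem latency_lower_bound_general (T : ℕ → ℕ → ℝ) (k l : ℕ) (hk : 0 < k) (hkl : k < l)
    (A : Finset ℕ) (hAne : A.Nonempty)
    (hmax : A.max' hAne = k)
    (Sstar : Finset ℕ) (h1 : A ⊆ Sstar) (h2 : Sstar ⊆ Finset.Ioo 0 l) :
    chainSum T ({0} ∪ Sstar.filter (fun s => s < k) ∪ {k}) + Topt T k l ≤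
      chainSum T ({0} ∪ Sstar ∪ {l}) := by
  have hkS : k ∈ Sstar := h1 (hmax ▸ A.max'_mem hAne)
  set lo := Sstar.filter (fun s => s < k)
  set hi := Sstar.filter (fun s => k < s)
  have hsplit : {0} ∪ Sstar ∪ {l} = {0} ∪ lo ∪ {k} ∪ (hi ∪ {l}) := by
    ext a
    simp only [mem_union, mem_singleton, mem_filter, lo, hi]
    rcases lt_trichotomy a k with h | rfl | h
    · simp only [h, h.ne, h.not_gt, and_true, and_false, or_false]; tauto
    · simp only [lt_irrefl, and_false, or_false, hkS, true_or, or_true]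
    · simp only [h, h.ne', h.not_gt, and_true, and_false, or_false]; tauto
  have hlo : ∀ a ∈ {0} ∪ lo, a < k := by simp [lo, hk]
  have hhi : ∀ b ∈ hi ∪ {l}, k < b := by simp [hi, hkl]
  have hTopt : Topt T k l ≤ chainSum T ({k} ∪ hi ∪ {l}) :=
    Topt_le_chainSum T fun a ha =>
      mem_Ioo.2 ⟨(mem_filter.1 ha).2, (mem_Ioo.1 (h2 (mem_filter.1 ha).1)).2⟩
  rw [hsplit, chainSum_union_singleton_union T hlo hhi, ← union_assoc]
  linarith

/-- Lower bound on the latency of any merge pattern containing a set `A` with maximum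
element `k`. -/
theorem latency_lower_bound (T : ℕ → ℕ → ℝ) (k l : ℕ) (hk : 0 < k) (hkl : k < l)
    (A' : Finset ℕ) (hA' : A' ⊆ Finset.Ioo 0 l)
    (A : Finset ℕ) (hA : A ⊆ Finset.Ioo 0 l) (hAne : A.Nonempty)
    (hmax : A.max' hAne = k)
    (Sstar : Finset ℕ) (h1 : A ⊆ Sstar) (h2 : Sstar ⊆ Finset.Ioo 0 l) :
    chainSum T ({0} ∪ Sstar.filter (fun s => s < k) ∪ {k}) + Topt T k l ≤
      chainSum T ({0} ∪ Sstar ∪ {l}) :=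
  latency_lower_bound_general T k l hk hkl A hAne hmax Sstar h1 h2
end
end
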